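/- Let d ∈ C²([0,T];ℝ^m) solve the Galerkin system d''_j + Σ_i B[w_i,w_j] d_i = 0 with B symmetric and the w_i orthonormal in L². Setting u_m(t) = Σ_i d_i(t) w_i, the discrete energy (1/2)‖u_m'(t)‖²_{L²} + (1/2)B[u_m(t),u_m(t)] is constant in t; consequently there exists C > 0 independent of m such that ‖u_m'(t)‖²_{L²} + ‖u_m(t)‖²_{H_0^1} ≤ C(‖u_m'(0)‖²_{L²} + ‖u_m(0)‖²_{H_0^1}) for all t ∈ [0,T]. -/

import Mathlib

/-!
Multiplying the Galerkin system by `d'` and using the symmetry of `B` shows that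
`|d'|² + B[u_m, u_m]` has zero derivative; orthonormality of the `wᵢ` turns `|d'|²` into
`‖u_m'‖²_{L²}`. Since `u_m(0) = 0`, Cauchy–Schwarz gives `u_m(y)² ≤ L ‖∂ₓu_m‖²_{L²}`, hence
`B[u, u] ≤ (a² + L Σₖ Lβₖ) ‖∂ₓu‖²_{L²}` and `a² ‖u‖²_{H¹} ≤ (1 + L²) B[u, u]`. Comparing the
energies at `t` and at `0` through these two bounds gives a constant depending only on `L`, `a`
and the `βₖ`.
-/

open Real Set MeasureTheory intervalIntegral

theorem sq_intervalIntegral_le_mul_intervalIntegral_sq {f : ℝ → ℝ} {a b : ℝ} (hab : a ≤ b)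
    (hf : IntervalIntegrable f volume a b)
    (hf2 : IntervalIntegrable (fun x => f x ^ 2) volume a b) :
    (∫ x in a..b, f x) ^ 2 ≤ (b - a) * ∫ x in a..b, f x ^ 2 := by
  -- `c ↦ ∫ (f - c)²` is a nonnegative quadratic, so its discriminant is nonpositive.
  have hquad : ∀ c : ℝ, 0 ≤ (b - a) * (c * c) + (-2 * ∫ x in a..b, f x) * c +
      ∫ x in a..b, f x ^ 2 := by
    intro c
    have hexpand : ∫ x in a..b, (f x - c) ^ 2 =
        (b - a) * (c * c) + (-2 * ∫ x in a..b, f x) * c + ∫ x in a..b, f x ^ 2 := by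
      simp_rw [sub_sq]
      rw [integral_add (hf2.sub ((hf.const_mul 2).mul_const c)) intervalIntegrable_const,
        integral_sub hf2 ((hf.const_mul 2).mul_const c), intervalIntegral.integral_mul_const,
        intervalIntegral.integral_const_mul, intervalIntegral.integral_const, smul_eq_mul]
      ring
    exact hexpand ▸ integral_nonneg hab fun x _ => sq_nonneg _
  have hdiscrim := discrim_le_zero hquad
  rw [discrim] at hdiscrim
  linarith

/-- A C¹ stand-in for membership in `H₀¹((0, L))`, with `u'` playing the role of `u_x`. -/
structure IsPinnedC1 (L : ℝ) (u u' : ℝ → ℝ) : Prop where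
  apply_zero : u 0 = 0
  hasDerivAt : ∀ x ∈ Icc 0 L, HasDerivAt u (u' x) x
  continuousOn_deriv : ContinuousOn u' (Icc 0 L)

namespace IsPinnedC1

variable {L : ℝ} {u u' : ℝ → ℝ}

theorem continuousOn (hu : IsPinnedC1 L u u') : ContinuousOn u (Icc 0 L) :=
  fun x hx => (hu.hasDerivAt x hx).continuousAt.continuousWithinAt

theorem intervalIntegrable_deriv_pow (hu : IsPinnedC1 L u u') (k : ℕ) {y : ℝ}
    (hy : y ∈ Icc 0 L) : IntervalIntegrable (fun x => u' x ^ k) volume 0 y :=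
  ((hu.continuousOn_deriv.pow k).mono (by
    rw [uIcc_of_le hy.1]; exact Icc_subset_Icc le_rfl hy.2)).intervalIntegrable

theorem eq_intervalIntegral_deriv (hu : IsPinnedC1 L u u') {y : ℝ} (hy : y ∈ Icc 0 L) :
    u y = ∫ x in (0:ℝ)..y, u' x := by
  have hderiv : ∀ x ∈ uIcc 0 y, HasDerivAt u (u' x) x := fun x hx => by
    rw [uIcc_of_le hy.1] at hx
    exact hu.hasDerivAt x ⟨hx.1, hx.2.trans hy.2⟩
  rw [integral_eq_sub_of_hasDerivAt hderiv
    (by simpa using hu.intervalIntegrable_deriv_pow 1 hy), hu.apply_zero, sub_zero]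

theorem sq_le (hu : IsPinnedC1 L u u') {y : ℝ} (hy : y ∈ Icc 0 L) :
    u y ^ 2 ≤ L * ∫ x in (0:ℝ)..L, u' x ^ 2 := by
  have hmono : ∫ x in (0:ℝ)..y, u' x ^ 2 ≤ ∫ x in (0:ℝ)..L, u' x ^ 2 :=
    integral_mono_interval le_rfl hy.1 hy.2 (.of_forall fun x => sq_nonneg _)
      (hu.intervalIntegrable_deriv_pow 2 ⟨hy.1.trans hy.2, le_rfl⟩)
  calc u y ^ 2 = (∫ x in (0:ℝ)..y, u' x) ^ 2 := by rw [hu.eq_intervalIntegral_deriv hy]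
    _ ≤ (y - 0) * ∫ x in (0:ℝ)..y, u' x ^ 2 :=
      sq_intervalIntegral_le_mul_intervalIntegral_sq hy.1
        (by simpa using hu.intervalIntegrable_deriv_pow 1 hy)
        (hu.intervalIntegrable_deriv_pow 2 hy)
    _ ≤ L * ∫ x in (0:ℝ)..L, u' x ^ 2 := by
      rw [sub_zero]
      exact mul_le_mul hy.2 hmono (integral_nonneg hy.1 fun x _ => sq_nonneg _)
        (hy.1.trans hy.2)

theorem intervalIntegral_sq_le (hu : IsPinnedC1 L u u') (hL : 0 ≤ L) :
    ∫ x in (0:ℝ)..L, u x ^ 2 ≤ L ^ 2 * ∫ x in (0:ℝ)..L, u' x ^ 2 := by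
  calc ∫ x in (0:ℝ)..L, u x ^ 2 ≤ ∫ _ in (0:ℝ)..L, L * ∫ x in (0:ℝ)..L, u' x ^ 2 :=
        integral_mono_on hL ((hu.continuousOn.pow 2).intervalIntegrable_of_Icc hL)
          intervalIntegrable_const fun y hy => hu.sq_le hy
    _ = L ^ 2 * ∫ x in (0:ℝ)..L, u' x ^ 2 := by
        rw [intervalIntegral.integral_const, smul_eq_mul]; ring

end IsPinnedC1

/-- `B[u, u]` of the paper, with `u'` playing the role of `u_x`. -/
noncomputable def stringForm (L a : ℝ) (n : ℕ) (β X : ℕ → ℝ) (u u' : ℝ → ℝ) : ℝ :=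
  (∫ x in (0:ℝ)..L, a ^ 2 * u' x ^ 2) + ∑ k ∈ Finset.range n, L * β k * u (X k) ^ 2

section StringForm

variable {L a : ℝ} {n : ℕ} {β X : ℕ → ℝ} {u u' : ℝ → ℝ}

theorem stringForm_eq :
    stringForm L a n β X u u' =
      a ^ 2 * (∫ x in (0:ℝ)..L, u' x ^ 2) + ∑ k ∈ Finset.range n, L * β k * u (X k) ^ 2 := by
  rw [stringForm, intervalIntegral.integral_const_mul]

theorem stringForm_coercive (hL : 0 ≤ L) (hβ : ∀ k < n, 0 ≤ β k) (hu : IsPinnedC1 L u u') :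
    a ^ 2 * ((∫ x in (0:ℝ)..L, u x ^ 2) + ∫ x in (0:ℝ)..L, u' x ^ 2) ≤
      (1 + L ^ 2) * stringForm L a n β X u u' := by
  have hpoincare := mul_le_mul_of_nonneg_left (hu.intervalIntegral_sq_le hL) (sq_nonneg a)
  have hpoint : 0 ≤ ∑ k ∈ Finset.range n, L * β k * u (X k) ^ 2 :=
    Finset.sum_nonneg fun k hk =>
      mul_nonneg (mul_nonneg hL (hβ k (Finset.mem_range.mp hk))) (sq_nonneg _)
  rw [stringForm_eq]
  nlinarith [sq_nonneg L, hpoincare, hpoint]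

theorem stringForm_bounded (hβ : ∀ k < n, 0 ≤ β k) (hX : ∀ k < n, X k ∈ Icc 0 L)
    (hu : IsPinnedC1 L u u') :
    stringForm L a n β X u u' ≤
      (a ^ 2 + L * ∑ k ∈ Finset.range n, L * β k) * ∫ x in (0:ℝ)..L, u' x ^ 2 := by
  have hpoint : ∑ k ∈ Finset.range n, L * β k * u (X k) ^ 2 ≤
      ∑ k ∈ Finset.range n, L * β k * (L * ∫ x in (0:ℝ)..L, u' x ^ 2) :=
    Finset.sum_le_sum fun k hk => by
      have hk := Finset.mem_range.mp hk
      exact mul_le_mul_of_nonneg_left (hu.sq_le (hX k hk))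
        (mul_nonneg ((hX k hk).1.trans (hX k hk).2) (hβ k hk))
  rw [stringForm_eq, ← Finset.sum_mul] at *
  linarith

theorem exists_bound_of_energy_eq (ha : 0 < a) (hL : 0 ≤ L) (hβ : ∀ k < n, 0 ≤ β k)
    (hX : ∀ k < n, X k ∈ Icc 0 L) :
    ∃ C > (0:ℝ), ∀ {u₀ u₀' v₀ u u' v : ℝ → ℝ}, IsPinnedC1 L u₀ u₀' → IsPinnedC1 L u u' →
      (∫ x in (0:ℝ)..L, v x ^ 2) + stringForm L a n β X u u' =
        (∫ x in (0:ℝ)..L, v₀ x ^ 2) + stringForm L a n β X u₀ u₀' →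
      (∫ x in (0:ℝ)..L, v x ^ 2) + ((∫ x in (0:ℝ)..L, u x ^ 2) + ∫ x in (0:ℝ)..L, u' x ^ 2) ≤
        C * ((∫ x in (0:ℝ)..L, v₀ x ^ 2) +
          ((∫ x in (0:ℝ)..L, u₀ x ^ 2) + ∫ x in (0:ℝ)..L, u₀' x ^ 2)) := by
  set K := a ^ 2 + L * ∑ k ∈ Finset.range n, L * β k
  set c := (1 + L ^ 2) / a ^ 2
  have hK : 0 ≤ K := add_nonneg (sq_nonneg a) (mul_nonneg hL
    (Finset.sum_nonneg fun k hk => mul_nonneg hL (hβ k (Finset.mem_range.mp hk))))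
  have hc : 0 ≤ c := by positivity
  refine ⟨(1 + c) * (1 + K), by positivity, fun {u₀ u₀' v₀ u u' v} hu₀ hu hE => ?_⟩
  have hsq : ∀ f : ℝ → ℝ, 0 ≤ ∫ x in (0:ℝ)..L, f x ^ 2 := fun f =>
    intervalIntegral.integral_nonneg hL fun x _ => sq_nonneg _
  have hcoer : (∫ x in (0:ℝ)..L, u x ^ 2) + ∫ x in (0:ℝ)..L, u' x ^ 2 ≤
      c * stringForm L a n β X u u' := by
    rw [div_mul_eq_mul_div, le_div_iff₀ (by positivity), mul_comm]
    exact stringForm_coercive hL hβ hu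
  have hform : 0 ≤ stringForm L a n β X u u' := by
    nlinarith [stringForm_coercive (a := a) (X := X) hL hβ hu, hsq u, hsq u', sq_nonneg a]
  have hbound := stringForm_bounded (a := a) hβ hX hu₀
  calc (∫ x in (0:ℝ)..L, v x ^ 2) + ((∫ x in (0:ℝ)..L, u x ^ 2) + ∫ x in (0:ℝ)..L, u' x ^ 2)
      ≤ (1 + c) * ((∫ x in (0:ℝ)..L, v x ^ 2) + stringForm L a n β X u u') := by
        nlinarith [hsq v, hcoer, hform]
    _ = (1 + c) * ((∫ x in (0:ℝ)..L, v₀ x ^ 2) + stringForm L a n β X u₀ u₀') := by rw [hE]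
    _ ≤ (1 + c) * ((1 + K) * ((∫ x in (0:ℝ)..L, v₀ x ^ 2) +
          ((∫ x in (0:ℝ)..L, u₀ x ^ 2) + ∫ x in (0:ℝ)..L, u₀' x ^ 2))) := by
        gcongr
        nlinarith [hsq v₀, hsq u₀, hsq u₀', hbound]
    _ = _ := by ring

end StringForm

section QuadraticExpansion

variable {ι κ : Type*} [Fintype ι]

theorem intervalIntegral_sum_mul_sq {μ : Measure ℝ} {a b : ℝ} {f : ι → ℝ → ℝ}
    (hf : ∀ i j, IntervalIntegrable (fun x => f i x * f j x) μ a b) (c : ι → ℝ) :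
    ∫ x in a..b, (∑ i, c i * f i x) ^ 2 ∂μ =
      ∑ i, ∑ j, c i * c j * ∫ x in a..b, f i x * f j x ∂μ := by
  have hexpand : ∀ x, (∑ i, c i * f i x) ^ 2 = ∑ i, ∑ j, c i * c j * (f i x * f j x) := by
    intro x
    rw [sq, Finset.sum_mul_sum]
    exact Finset.sum_congr rfl fun i _ => Finset.sum_congr rfl fun j _ => by ring
  simp_rw [hexpand]
  rw [intervalIntegral.integral_finsetSum (f := fun i x => ∑ j, c i * c j * (f i x * f j x))
    fun i _ => by
      have hsum := IntervalIntegrable.sum Finset.univ fun j _ => (hf i j).const_mul (c i * c j)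
      simpa only [Finset.sum_fn] using hsum]
  refine Finset.sum_congr rfl fun i _ => ?_
  rw [intervalIntegral.integral_finsetSum fun j _ => (hf i j).const_mul _]
  exact Finset.sum_congr rfl fun j _ => intervalIntegral.integral_const_mul _ _

theorem sum_mul_sum_mul_sq (s : Finset κ) (μ : κ → ℝ) (v : ι → κ → ℝ) (c : ι → ℝ) :
    ∑ k ∈ s, μ k * (∑ i, c i * v i k) ^ 2 =
      ∑ i, ∑ j, c i * c j * ∑ k ∈ s, μ k * v i k * v j k := by
  simp_rw [sq, Finset.sum_mul_sum, Finset.mul_sum]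
  rw [Finset.sum_comm]
  refine Finset.sum_congr rfl fun i _ => ?_
  rw [Finset.sum_comm]
  exact Finset.sum_congr rfl fun j _ => Finset.sum_congr rfl fun k _ => by ring

end QuadraticExpansion

section Energy

variable {ι : Type*} [Fintype ι] {B : Matrix ι ι ℝ} {d d' d'' : ℝ → ι → ℝ}

theorem hasDerivAt_oscillatorEnergy (hB : B.IsSymm) (hd : ∀ j t, HasDerivAt (fun s => d s j) (d' t j) t)
    (hd' : ∀ j t, HasDerivAt (fun s => d' s j) (d'' t j) t) (t : ℝ) :
    HasDerivAt (fun s => ∑ i, d' s i ^ 2 + ∑ i, ∑ j, d s i * d s j * B i j)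
      (2 * ∑ j, d' t j * (d'' t j + ∑ i, B i j * d t i)) t := by
  have hderiv : HasDerivAt (fun s => ∑ i, d' s i ^ 2 + ∑ i, ∑ j, d s i * d s j * B i j)
      (∑ i, 2 * d' t i * d'' t i + ∑ i, ∑ j, (d' t i * d t j + d t i * d' t j) * B i j) t :=
    .add (.fun_sum fun i _ => by simpa using (hd' i t).fun_pow 2)
      (.fun_sum fun i _ => .fun_sum fun j _ => ((hd i t).mul (hd j t)).mul_const (B i j))
  refine hderiv.congr_deriv ?_
  have hsymm : ∑ i, ∑ j, d' t i * d t j * B i j = ∑ i, ∑ j, d t i * d' t j * B i j := by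
    rw [Finset.sum_comm]
    exact Finset.sum_congr rfl fun i _ => Finset.sum_congr rfl fun j _ => by
      rw [hB.apply i j]; ring
  have hcross : ∑ j, d' t j * ∑ i, B i j * d t i = ∑ i, ∑ j, d t i * d' t j * B i j := by
    rw [Finset.sum_comm]
    simp_rw [Finset.mul_sum]
    exact Finset.sum_congr rfl fun i _ => Finset.sum_congr rfl fun j _ => by ring
  simp only [add_mul, mul_add, Finset.sum_add_distrib]
  rw [hsymm, hcross, Finset.mul_sum]
  ring_nf

theorem oscillatorEnergy_eq_of_ode (hB : B.IsSymm) (hd : ∀ j t, HasDerivAt (fun s => d s j) (d' t j) t)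
    (hd' : ∀ j t, HasDerivAt (fun s => d' s j) (d'' t j) t) {T : ℝ}
    (hode : ∀ t ∈ Icc 0 T, ∀ j, d'' t j + ∑ i, B i j * d t i = 0) {t : ℝ} (ht : t ∈ Icc 0 T) :
    ∑ i, d' t i ^ 2 + ∑ i, ∑ j, d t i * d t j * B i j =
      ∑ i, d' 0 i ^ 2 + ∑ i, ∑ j, d 0 i * d 0 j * B i j := by
  refine constant_of_has_deriv_right_zero
    (fun s _ => (hasDerivAt_oscillatorEnergy hB hd hd' s).continuousAt.continuousWithinAt)
    (fun s hs => ?_) t ht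
  simpa [hode s (Ico_subset_Icc_self hs)] using (hasDerivAt_oscillatorEnergy hB hd hd' s).hasDerivWithinAt

end Energy

section Galerkin

variable {ι : Type*} {L a : ℝ} {n : ℕ} {β X : ℕ → ℝ} {w w' : ι → ℝ → ℝ}

/-- The matrix `(B[wᵢ, wⱼ])ᵢⱼ` of the Galerkin system. -/
noncomputable def galerkinStiffness (L a : ℝ) (n : ℕ) (β X : ℕ → ℝ) (w w' : ι → ℝ → ℝ) :
    Matrix ι ι ℝ :=
  Matrix.of fun i j => (∫ x in (0:ℝ)..L, a ^ 2 * w' i x * w' j x) +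
    ∑ k ∈ Finset.range n, L * β k * w i (X k) * w j (X k)

theorem galerkinStiffness_isSymm : (galerkinStiffness L a n β X w w').IsSymm := by
  ext i j
  simp only [galerkinStiffness, Matrix.transpose_apply, Matrix.of_apply]
  congr 1
  · exact intervalIntegral.integral_congr fun x _ => by ring
  · exact Finset.sum_congr rfl fun k _ => by ring

variable [Fintype ι]

theorem isPinnedC1_sum (hw : ∀ i, ∀ x ∈ Icc 0 L, HasDerivAt (w i) (w' i x) x)
    (hw' : ∀ i, ContinuousOn (w' i) (Icc 0 L)) (hw0 : ∀ i, w i 0 = 0) (c : ι → ℝ) :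
    IsPinnedC1 L (fun x => ∑ i, c i * w i x) (fun x => ∑ i, c i * w' i x) where
  apply_zero := by simp [hw0]
  hasDerivAt x hx := .fun_sum fun i _ => (hw i x hx).const_mul (c i)
  continuousOn_deriv := continuousOn_finsetSum _ fun i _ => continuousOn_const.mul (hw' i)

theorem intervalIntegral_sum_mul_sq_of_orthonormal [DecidableEq ι] {μ : Measure ℝ} {a b : ℝ}
    (hw : ∀ i j, IntervalIntegrable (fun x => w i x * w j x) μ a b)
    (horth : ∀ i j, ∫ x in a..b, w i x * w j x ∂μ = if i = j then 1 else 0) (c : ι → ℝ) :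
    ∫ x in a..b, (∑ i, c i * w i x) ^ 2 ∂μ = ∑ i, c i ^ 2 := by
  rw [intervalIntegral_sum_mul_sq hw]
  simp [horth, sq]

theorem stringForm_sum (hL : 0 ≤ L) (hw' : ∀ i, ContinuousOn (w' i) (Icc 0 L)) (c : ι → ℝ) :
    stringForm L a n β X (fun x => ∑ i, c i * w i x) (fun x => ∑ i, c i * w' i x) =
      ∑ i, ∑ j, c i * c j * galerkinStiffness L a n β X w w' i j := by
  have hw'w' : ∀ i j, IntervalIntegrable (fun x => w' i x * w' j x) volume 0 L := fun i j =>
    ((hw' i).mul (hw' j)).intervalIntegrable_of_Icc hL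
  simp only [stringForm_eq, intervalIntegral_sum_mul_sq hw'w',
    sum_mul_sum_mul_sq (Finset.range n) (fun k => L * β k) (fun i k => w i (X k)),
    Finset.mul_sum, ← Finset.sum_add_distrib]
  refine Finset.sum_congr rfl fun i _ => Finset.sum_congr rfl fun j _ => ?_
  simp only [galerkinStiffness, Matrix.of_apply, mul_assoc, intervalIntegral.integral_const_mul,
    mul_add, Finset.mul_sum]
  ring_nf

theorem galerkin_energy_eq [DecidableEq ι] (hL : 0 ≤ L) (hw : ∀ i, ContinuousOn (w i) (Icc 0 L))
    (hw' : ∀ i, ContinuousOn (w' i) (Icc 0 L))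
    (horth : ∀ i j, ∫ x in (0:ℝ)..L, w i x * w j x = if i = j then 1 else 0)
    {d d' d'' : ℝ → ι → ℝ} (hd : ∀ j t, HasDerivAt (fun s => d s j) (d' t j) t)
    (hd' : ∀ j t, HasDerivAt (fun s => d' s j) (d'' t j) t) {T : ℝ}
    (hode : ∀ t ∈ Icc 0 T, ∀ j,
      d'' t j + ∑ i, galerkinStiffness L a n β X w w' i j * d t i = 0)
    {t : ℝ} (ht : t ∈ Icc 0 T) :
    (∫ x in (0:ℝ)..L, (∑ i, d' t i * w i x) ^ 2) +
        stringForm L a n β X (fun x => ∑ i, d t i * w i x) (fun x => ∑ i, d t i * w' i x) =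
      (∫ x in (0:ℝ)..L, (∑ i, d' 0 i * w i x) ^ 2) +
        stringForm L a n β X (fun x => ∑ i, d 0 i * w i x) (fun x => ∑ i, d 0 i * w' i x) := by
  have hww : ∀ i j, IntervalIntegrable (fun x => w i x * w j x) volume 0 L := fun i j =>
    ((hw i).mul (hw j)).intervalIntegrable_of_Icc hL
  simp only [intervalIntegral_sum_mul_sq_of_orthonormal hww horth, stringForm_sum hL hw']
  exact oscillatorEnergy_eq_of_ode galerkinStiffness_isSymm hd hd' hode ht

end Galerkin

theorem galerkin_energy_bound_general
    (L a T : ℝ) (hL : 0 < L) (ha : 0 < a)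
    (n : ℕ) (β X : ℕ → ℝ) (hβ : ∀ k < n, 0 ≤ β k) (hX : ∀ k < n, X k ∈ Set.Ioo 0 L) :
    ∃ C > (0:ℝ), ∀ (m : ℕ) (w w' : Fin m → ℝ → ℝ) (d d' d'' : ℝ → Fin m → ℝ),
      (∀ i, ∀ x ∈ Set.Icc (0:ℝ) L, HasDerivAt (w i) (w' i x) x) →
      (∀ i, ContinuousOn (w' i) (Set.Icc 0 L)) →
      (∀ i, w i 0 = 0) → (∀ i, w i L = 0) →
      (∀ i j, (∫ x in (0:ℝ)..L, w i x * w j x) = if i = j then 1 else 0) →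
      (∀ j t, HasDerivAt (fun s => d s j) (d' t j) t) →
      (∀ j t, HasDerivAt (fun s => d' s j) (d'' t j) t) →
      (∀ t ∈ Set.Icc (0:ℝ) T, ∀ j, d'' t j +
        ∑ i, ((∫ x in (0:ℝ)..L, a ^ 2 * w' i x * w' j x) +
          ∑ k ∈ Finset.range n, L * β k * w i (X k) * w j (X k)) * d t i = 0) →
      ((∀ t₁ ∈ Set.Icc (0:ℝ) T, ∀ t₂ ∈ Set.Icc (0:ℝ) T,
          (1/2) * (∫ x in (0:ℝ)..L, (∑ i, d' t₁ i * w i x) ^ 2) +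
            (1/2) * ((∫ x in (0:ℝ)..L, a ^ 2 * (∑ i, d t₁ i * w' i x) ^ 2) +
              ∑ k ∈ Finset.range n, L * β k * (∑ i, d t₁ i * w i (X k)) ^ 2) =
          (1/2) * (∫ x in (0:ℝ)..L, (∑ i, d' t₂ i * w i x) ^ 2) +
            (1/2) * ((∫ x in (0:ℝ)..L, a ^ 2 * (∑ i, d t₂ i * w' i x) ^ 2) +
              ∑ k ∈ Finset.range n, L * β k * (∑ i, d t₂ i * w i (X k)) ^ 2)) ∧
        ∀ t ∈ Set.Icc (0:ℝ) T,
          (∫ x in (0:ℝ)..L, (∑ i, d' t i * w i x) ^ 2) +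
            ((∫ x in (0:ℝ)..L, (∑ i, d t i * w i x) ^ 2) +
              ∫ x in (0:ℝ)..L, (∑ i, d t i * w' i x) ^ 2) ≤
          C * ((∫ x in (0:ℝ)..L, (∑ i, d' 0 i * w i x) ^ 2) +
            ((∫ x in (0:ℝ)..L, (∑ i, d 0 i * w i x) ^ 2) +
              ∫ x in (0:ℝ)..L, (∑ i, d 0 i * w' i x) ^ 2))) := by
  obtain ⟨C, hC, hbound⟩ := exists_bound_of_energy_eq ha hL.le hβ fun k hk =>
    Ioo_subset_Icc_self (hX k hk)
  refine ⟨C, hC, fun m w w' d d' d'' hw hw' hw0 _ horth hd hd' hode => ?_⟩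
  have hE : ∀ t ∈ Icc 0 T, _ := fun t ht => galerkin_energy_eq hL.le
    (fun i x hx => (hw i x hx).continuousAt.continuousWithinAt) hw' horth hd hd' hode ht
  refine ⟨fun t₁ ht₁ t₂ ht₂ => ?_, fun t ht =>
    hbound (isPinnedC1_sum hw hw' hw0 (d 0)) (isPinnedC1_sum hw hw' hw0 (d t)) (hE t ht)⟩
  have hE₁₂ := (hE t₁ ht₁).trans (hE t₂ ht₂).symm
  unfold stringForm at hE₁₂
  linarith

/-- Energy conservation and the uniform (in `m`) a priori bound for the
Galerkin approximations `u_m(t) = Σᵢ dᵢ(t) wᵢ` of the string problem with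
elastic supports: the discrete energy
`½‖u_m'(t)‖²_{L²} + ½B[u_m(t),u_m(t)]` is constant in `t`, and there is a
constant `C > 0` independent of `m` with
`‖u_m'(t)‖²_{L²} + ‖u_m(t)‖²_{H₀¹} ≤ C (‖u_m'(0)‖²_{L²} + ‖u_m(0)‖²_{H₀¹})`. -/
theorem galerkin_energy_bound
    (L a T : ℝ) (hL : 0 < L) (ha : 0 < a) (hT : 0 < T)
    (n : ℕ) (β X : ℕ → ℝ) (hβ : ∀ k < n, 0 ≤ β k) (hX : ∀ k < n, X k ∈ Set.Ioo 0 L) :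
    ∃ C > (0:ℝ), ∀ (m : ℕ) (w w' : Fin m → ℝ → ℝ) (d d' d'' : ℝ → Fin m → ℝ),
      (∀ i, ∀ x ∈ Set.Icc (0:ℝ) L, HasDerivAt (w i) (w' i x) x) →
      (∀ i, ContinuousOn (w' i) (Set.Icc 0 L)) →
      (∀ i, w i 0 = 0) → (∀ i, w i L = 0) →
      (∀ i j, (∫ x in (0:ℝ)..L, w i x * w j x) = if i = j then 1 else 0) →
      (∀ j t, HasDerivAt (fun s => d s j) (d' t j) t) →
      (∀ j t, HasDerivAt (fun s => d' s j) (d'' t j) t) →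
      (∀ t ∈ Set.Icc (0:ℝ) T, ∀ j, d'' t j +
        ∑ i, ((∫ x in (0:ℝ)..L, a ^ 2 * w' i x * w' j x) +
          ∑ k ∈ Finset.range n, L * β k * w i (X k) * w j (X k)) * d t i = 0) →
      ((∀ t₁ ∈ Set.Icc (0:ℝ) T, ∀ t₂ ∈ Set.Icc (0:ℝ) T,
          (1/2) * (∫ x in (0:ℝ)..L, (∑ i, d' t₁ i * w i x) ^ 2) +
            (1/2) * ((∫ x in (0:ℝ)..L, a ^ 2 * (∑ i, d t₁ i * w' i x) ^ 2) +
              ∑ k ∈ Finset.range n, L * β k * (∑ i, d t₁ i * w i (X k)) ^ 2) =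
          (1/2) * (∫ x in (0:ℝ)..L, (∑ i, d' t₂ i * w i x) ^ 2) +
            (1/2) * ((∫ x in (0:ℝ)..L, a ^ 2 * (∑ i, d t₂ i * w' i x) ^ 2) +
              ∑ k ∈ Finset.range n, L * β k * (∑ i, d t₂ i * w i (X k)) ^ 2)) ∧
        ∀ t ∈ Set.Icc (0:ℝ) T,
          (∫ x in (0:ℝ)..L, (∑ i, d' t i * w i x) ^ 2) +
            ((∫ x in (0:ℝ)..L, (∑ i, d t i * w i x) ^ 2) +
              ∫ x in (0:ℝ)..L, (∑ i, d t i * w' i x) ^ 2) ≤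
          C * ((∫ x in (0:ℝ)..L, (∑ i, d' 0 i * w i x) ^ 2) +
            ((∫ x in (0:ℝ)..L, (∑ i, d 0 i * w i x) ^ 2) +
              ∫ x in (0:ℝ)..L, (∑ i, d 0 i * w' i x) ^ 2))) :=
  galerkin_energy_bound_general L a T hL ha n β X hβ hX
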